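/- arXiv:1906.00921 — 8 statements merged into one kernel-verified Lean document; each statement's English description precedes it below -/
import Mathlib

section
/- Every open immersion of schemes is a regular monomorphism: if f : X → Y is an open immersion, then f is the equalizer of the two canonical inclusions Y ⇉ Y ⊔_X Y into the pushout of Y ← X → Y. -/
/-!
The span `Y ← X → Z` of two open immersions is a locally directed diagram of open immersions, so
its colimit exists and is obtained by gluing `Y` and `Z` along `X`. Two points of `Y` and `Z` are
identified in the glued scheme exactly when they come from a common point of `X`; hence the
pushout square is also a pullback square. For `Z = Y` and `g = f`, a pullback square with both
legs `f` exhibits `f` as the equalizer of the two inclusions.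
-/

open CategoryTheory CategoryTheory.Limits AlgebraicGeometry

namespace AlgebraicGeometry

universe u

variable {X Y Z : Scheme.{u}} (f : X ⟶ Y) (g : X ⟶ Z) [IsOpenImmersion f] [IsOpenImmersion g]

instance isOpenImmersion_span_map {i j : WalkingSpan} (u : i ⟶ j) :
    IsOpenImmersion ((span f g).map u) := by
  rcases u with _ | _ | _
  · exact inferInstanceAs (IsOpenImmersion (𝟙 _))
  · exact inferInstanceAs (IsOpenImmersion f)
  · exact inferInstanceAs (IsOpenImmersion g)

instance isOpenImmersion_pushout_inl : IsOpenImmersion (pushout.inl f g) :=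
  inferInstanceAs (IsOpenImmersion (colimit.ι _ _))

namespace IsOpenImmersion

lemma pushout_inr_preimage_opensRange_inl :
    pushout.inr f g ⁻¹ᵁ (pushout.inl f g).opensRange = g.opensRange := by
  ext z
  constructor
  · rintro ⟨y, hy⟩
    obtain ⟨k, fi, fj, x, -, rfl⟩ := (Scheme.IsLocallyDirected.ι_eq_ι_iff (span f g)).mp hy
    -- only the apex of the span maps to both legs
    change WidePushoutShape.Hom k (some WalkingPair.right) at fj
    rcases fj with _ | _
    · change WidePushoutShape.Hom (some WalkingPair.right) (some WalkingPair.left) at fi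
      cases fi
    · exact ⟨x, rfl⟩
  · rintro ⟨x, rfl⟩
    exact ⟨f x, by simp only [← Scheme.Hom.comp_apply, pushout.condition]⟩

theorem isPullback_pushout : IsPullback f g (pushout.inl f g) (pushout.inr f g) :=
  isPullback f g (pushout.inl f g) (pushout.inr f g) pushout.condition.symm
    (pushout_inr_preimage_opensRange_inl f g)

end IsOpenImmersion

end AlgebraicGeometry

/-- Every open immersion of schemes is a regular monomorphism: if `f : X ⟶ Y`
is an open immersion, then the pushout `Y ⊔_X Y` of `Y ← X → Y` exists, and `f` is the
equalizer of the two canonical inclusions `Y ⇉ Y ⊔_X Y`. -/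
theorem openImmersion_regularMono {X Y : Scheme} (f : X ⟶ Y) [IsOpenImmersion f] :
    ∃ (Z : Scheme) (i₁ i₂ : Y ⟶ Z) (w : f ≫ i₁ = f ≫ i₂),
      Nonempty (IsColimit (PushoutCocone.mk i₁ i₂ w)) ∧
      Nonempty (IsLimit (Fork.ofι f w)) :=
  ⟨pushout f f, pushout.inl f f, pushout.inr f f, pushout.condition, ⟨pushoutIsPushout f f⟩,
    ⟨(IsOpenImmersion.isPullback_pushout f f).isLimitFork⟩⟩
end

section
/- Let X be a scheme and x, y ∈ X points. Then x specializes to y if and only if there exists a valuation ring R and a morphism f : Spec R → X such that f sends the closed point (maximal ideal) of Spec R to y and x lies in the image of f. -/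
open CategoryTheory AlgebraicGeometry IsLocalRing

/-!
If `x ⤳ y`, the composite `𝒪_{X,y} → 𝒪_{X,x} → κ(x)` is a ring map from a local ring to a field,
so it factors through a valuation subring `A ⊆ κ(x)` by a local homomorphism `𝒪_{X,y} → A`.
Then `Spec A → Spec 𝒪_{X,y} → X` sends the closed point to `y`, and its restriction to the
generic point `Spec κ(x)` of `Spec A` is the canonical point `Spec κ(x) → X`, hitting `x`.
Conversely, every point of the spectrum of a local ring specializes to the closed point, and
continuous maps preserve specialization.
-/

namespace AlgebraicGeometry.Scheme

variable {X : Scheme.{u}}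

lemma Hom.apply_specializes_apply_closedPoint {R : CommRingCat.{u}} [IsLocalRing R]
    (f : Spec R ⟶ X) (z : Spec R) : f z ⤳ f (closedPoint R) :=
  (specializes_closedPoint z).map f.continuous

lemma SpecMap_fromSpecStalk_closedPoint {y : X} {R : CommRingCat.{u}} [IsLocalRing R]
    (φ : X.presheaf.stalk y ⟶ R) [IsLocalHom φ.hom] :
    (Spec.map φ ≫ X.fromSpecStalk y) (closedPoint R) = y := by
  change X.fromSpecStalk y (Spec.map φ (closedPoint R)) = y
  rw [Spec_closedPoint, fromSpecStalk_closedPoint]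

lemma SpecMap_SpecMap_fromSpecStalk_eq_fromSpecResidueField {x y : X} (h : x ⤳ y)
    {R : CommRingCat.{u}} (ψ : X.presheaf.stalk y ⟶ R) (g : R ⟶ X.residueField x)
    (hψg : ψ ≫ g = X.presheaf.stalkSpecializes h ≫ X.residue x) :
    Spec.map g ≫ Spec.map ψ ≫ X.fromSpecStalk y = X.fromSpecResidueField x := by
  rw [← Spec.map_comp_assoc, hψg, Spec.map_comp, Category.assoc,
    SpecMap_stalkSpecializes_fromSpecStalk]
  rfl

lemma mem_range_of_comp_eq_fromSpecResidueField {x : X} {Y : Scheme.{u}} {f : Y ⟶ X}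
    (g : Spec (X.residueField x) ⟶ Y) (hg : g ≫ f = X.fromSpecResidueField x) :
    x ∈ Set.range f := by
  refine ⟨g (closedPoint _), ?_⟩
  change (g ≫ f) _ = x
  rw [hg]
  exact fromSpecResidueField_apply x _

end AlgebraicGeometry.Scheme

/-- In a scheme `X`, a point `x` specializes to a point `y` if and only if
there is a valuation ring `R` and a morphism `f : Spec R ⟶ X` sending the closed point
(the maximal ideal) of `Spec R` to `y`, with `x` in the image of `f`. -/
theorem specializes_iff_valuationRing {X : Scheme.{u}} (x y : X) :
    x ⤳ y ↔
      ∃ (R : Type u) (_ : CommRing R) (_ : IsDomain R) (_ : ValuationRing R)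
        (f : Spec (CommRingCat.of R) ⟶ X),
        f.base (IsLocalRing.closedPoint R) = y ∧ x ∈ Set.range f.base := by
  constructor
  · intro h
    let φ := X.presheaf.stalkSpecializes h ≫ X.residue x
    obtain ⟨A, hA, _⟩ := exists_factor_valuationRing φ.hom
    let ψ : X.presheaf.stalk y ⟶ .of A := CommRingCat.ofHom (φ.hom.codRestrict A.toSubring hA)
    refine ⟨A, inferInstance, inferInstance, inferInstance, Spec.map ψ ≫ X.fromSpecStalk y,
      Scheme.SpecMap_fromSpecStalk_closedPoint ψ,
      Scheme.mem_range_of_comp_eq_fromSpecResidueField _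
        (Scheme.SpecMap_SpecMap_fromSpecStalk_eq_fromSpecResidueField h ψ
          (CommRingCat.ofHom (algebraMap A (X.residueField x))) rfl)⟩
  · rintro ⟨R, _, _, _, f, rfl, z, rfl⟩
    exact f.apply_specializes_apply_closedPoint z
end

section
/- Let f : X → Y be an immersion of schemes. Suppose that for every affine open Y' ⊆ Y with preimage X' = f⁻¹(Y'), and every closed point y of Y' not in the image of X' → Y', the induced map X' ⊔ Spec κ(y) → Y' is an immersion. Then f is a closed immersion. -/
/-!
Since `f` is an immersion, its image is locally closed, so being a closed immersion is a question
of the image being closed, which is local on `Y`; hence we may assume `Y` affine, in particular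
quasi-compact. If the image were not closed, the nonempty closed set `closure (range f) \ range f`
would contain a closed point `y`. But `X ⊔ Spec κ(y) → Y` being an embedding makes the image of the
open piece `Spec κ(y)`, namely `{y}`, relatively open in `range f ∪ {y}`, so `y` has a neighbourhood
missing `range f`, contradicting `y ∈ closure (range f)`.
-/

open CategoryTheory CategoryTheory.Limits AlgebraicGeometry Topology

theorem Topology.IsInducing.disjoint_closure_image_of_isOpen {P Z : Type*} [TopologicalSpace P]
    [TopologicalSpace Z] {g : P → Z} (hg : IsInducing g) {A B : Set P} (hB : IsOpen B)
    (hAB : Disjoint (g '' A) (g '' B)) : Disjoint (closure (g '' A)) (g '' B) := by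
  obtain ⟨V, hV, rfl⟩ := hg.isOpen_iff.mp hB
  rw [Set.disjoint_right]
  rintro _ ⟨b, hbV, rfl⟩ hb
  obtain ⟨_, haV, a, ha, rfl⟩ := mem_closure_iff.mp hb V hV hbV
  exact Set.disjoint_left.mp hAB ⟨a, ha, rfl⟩ ⟨a, haV, rfl⟩

theorem IsLocallyClosed.isClosed_of_forall_closed_point {X : Type*} [TopologicalSpace X]
    [T0Space X] [CompactSpace X] {S : Set X} (hS : IsLocallyClosed S)
    (h : ∀ z ∈ closure S, IsClosed ({z} : Set X) → z ∈ S) : IsClosed S := by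
  have hclosed : IsClosed (closure S \ S) := by
    simpa [coborder] using hS.isOpen_coborder.isClosed_compl
  by_contra hS'
  obtain ⟨z, ⟨hzS, hzS'⟩, hz⟩ := hclosed.exists_closed_singleton
    (Set.nonempty_of_ssubset (subset_closure.ssubset_of_ne fun h ↦ hS' (h ▸ isClosed_closure)))
  exact hzS' (h z hzS hz)

namespace AlgebraicGeometry

theorem Scheme.disjoint_closure_range_of_isImmersion_coprodDesc {X W Z : Scheme}
    (f : X ⟶ Z) (h : W ⟶ Z) [IsImmersion (coprod.desc f h)]
    (hfh : Disjoint (Set.range f) (Set.range h)) :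
    Disjoint (closure (Set.range f)) (Set.range h) := by
  have hrange {V : Scheme} (i : V ⟶ X ⨿ W) :
      Set.range (i ≫ coprod.desc f h) = coprod.desc f h '' Set.range i := by
    rw [← Set.range_comp]; rfl
  have hf := hrange coprod.inl
  have hh := hrange coprod.inr
  rw [coprod.inl_desc] at hf
  rw [coprod.inr_desc] at hh
  rw [hf, hh] at hfh ⊢
  exact (coprod.desc f h).isEmbedding.isInducing.disjoint_closure_image_of_isOpen
    (coprod.inr : W ⟶ X ⨿ W).isOpenEmbedding.isOpen_range hfh

theorem IsClosedImmersion.of_isImmersion_coprodDesc_fromSpecResidueField {X Y : Scheme}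
    [CompactSpace Y] (f : X ⟶ Y) [IsImmersion f]
    (H : ∀ y : Y, IsClosed ({y} : Set Y) → y ∉ Set.range f →
      IsImmersion (coprod.desc f (Y.fromSpecResidueField y))) :
    IsClosedImmersion f := by
  refine .of_isPreimmersion f
    (f.isLocallyClosed_range.isClosed_of_forall_closed_point fun y hy hy_closed ↦ ?_)
  by_contra hyf
  have := H y hy_closed hyf
  have hdisj := Scheme.disjoint_closure_range_of_isImmersion_coprodDesc f
    (Y.fromSpecResidueField y)
    (by rwa [Scheme.range_fromSpecResidueField, Set.disjoint_singleton_right])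
  rw [Scheme.range_fromSpecResidueField, Set.disjoint_singleton_right] at hdisj
  exact hdisj hy

end AlgebraicGeometry

/-- Let `f : X ⟶ Y` be an immersion of schemes.  Suppose that for every affine
open `Y' ⊆ Y` (with preimage `X' = f ⁻¹ᵁ Y'` and restricted morphism `X' ⟶ Y'`) and every
closed point `y` of `Y'` not in the image of `X' ⟶ Y'`, the induced morphism
`X' ⊔ Spec κ(y) ⟶ Y'` is an immersion.  Then `f` is a closed immersion. -/
theorem isClosedImmersion_of_immersion_disjoint_closed_points {X Y : Scheme}
    (f : X ⟶ Y) [IsImmersion f]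
    (H : ∀ U : Y.Opens, IsAffineOpen U → ∀ y : U.toScheme,
      IsClosed ({y} : Set U.toScheme) → y ∉ Set.range (f ∣_ U).base →
      IsImmersion (coprod.desc (f ∣_ U) (U.toScheme.fromSpecResidueField y))) :
    IsClosedImmersion f := by
  refine IsZariskiLocalAtTarget.of_iSup_eq_top _ (iSup_affineOpens_eq_top Y) fun U ↦ ?_
  have : IsAffine U.1.toScheme := U.2
  exact .of_isImmersion_coprodDesc_fromSpecResidueField _ (H U U.2)
end

section
/- Let A be a commutative ring and let B = A ⊕ I be a commutative A-algebra with a surjection π : B → A of A-algebras with kernel I, such that B admits an A-algebra homomorphism m : B ×_A B → A ⊕ I ⊕ I → B (where B ×_A B ≅ A ⊕ I ⊕ I) making B into an abelian group object in the category of augmented A-algebras. Then I² = 0, and m is given by (a, b, c) ↦ (a, b + c). -/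
/-!
Writing `σ = algebraMap A B`, the unit laws say `m x (σ (π x)) = x` and `m (σ (π x)) x = x`; on
the augmentation ideal they read `m i 0 = i` and `m 0 j = j`. Multiplicativity on the fiber
product then gives `i * j = m i 0 * m 0 j = m (i * 0) (0 * j) = m 0 0 = 0`, and additivity applied
to `(x, y) + (σ a, σ a) = (x, σ a) + (σ a, y)` gives `m x y + σ a = x + y`.
-/

section

variable {A B : Type*} [CommSemiring A] [Semiring B] [Algebra A B] (π : B →ₐ[A] A)
  {m : B → B → B}

theorem apply_zero_right_of_unit_law (hunit : ∀ x, m x (algebraMap A B (π x)) = x) {i : B}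
    (hi : π i = 0) : m i 0 = i := by
  simpa [hi] using hunit i

theorem apply_zero_left_of_unit_law (hunit : ∀ x, m (algebraMap A B (π x)) x = x) {j : B}
    (hj : π j = 0) : m 0 j = j := by
  simpa [hj] using hunit j

theorem mul_eq_zero_of_unit_laws
    (hmul : ∀ x y x' y', π x = π y → π x' = π y' → m (x * x') (y * y') = m x y * m x' y')
    (hunit₁ : ∀ x, m x (algebraMap A B (π x)) = x)
    (hunit₂ : ∀ x, m (algebraMap A B (π x)) x = x) {i j : B} (hi : π i = 0) (hj : π j = 0) :
    i * j = 0 :=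
  calc i * j = m i 0 * m 0 j := by
        rw [apply_zero_right_of_unit_law π hunit₁ hi, apply_zero_left_of_unit_law π hunit₂ hj]
    _ = m (i * 0) (0 * j) := (hmul i 0 0 j (by simp [hi]) (by simp [hj])).symm
    _ = 0 := by rw [mul_zero, zero_mul, apply_zero_right_of_unit_law π hunit₁ (map_zero π)]

theorem apply_add_algebraMap_of_unit_laws
    (hadd : ∀ x y x' y', π x = π y → π x' = π y' → m (x + x') (y + y') = m x y + m x' y')
    (hunit₁ : ∀ x, m x (algebraMap A B (π x)) = x)
    (hunit₂ : ∀ x, m (algebraMap A B (π x)) x = x) {x y : B} (hxy : π x = π y) :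
    m x y + algebraMap A B (π x) = x + y := by
  have hsy : m (algebraMap A B (π x)) y = y := hxy ▸ hunit₂ y
  set s := algebraMap A B (π x)
  have hs : π s = π x := AlgHom.commutes π (π x)
  have hdiag : m s s = s := by simpa [hs] using hunit₁ s
  calc m x y + s = m x y + m s s := by rw [hdiag]
    _ = m (x + s) (y + s) := (hadd x y s s hxy rfl).symm
    _ = m (x + s) (s + y) := by rw [add_comm y]
    _ = m x s + m s y := hadd x s s y hs.symm (hs.trans hxy)
    _ = x + y := by rw [hunit₁ x, hsy]

end

theorem augmented_group_object_square_zero_general {A B : Type*} [CommRing A] [CommRing B]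
    [Algebra A B] (π : B →ₐ[A] A) (m : B → B → B)
    -- `m` is additive on the fiber product `B ×_A B`
    (hadd : ∀ x y x' y', π x = π y → π x' = π y' →
      m (x + x') (y + y') = m x y + m x' y')
    -- `m` is multiplicative on the fiber product `B ×_A B`
    (hmul : ∀ x y x' y', π x = π y → π x' = π y' →
      m (x * x') (y * y') = m x y * m x' y')
    -- the unit laws: `σ ∘ π` is a two-sided unit for `m`
    (hunit₁ : ∀ x, m x (algebraMap A B (π x)) = x)
    (hunit₂ : ∀ x, m (algebraMap A B (π x)) x = x) :
    (∀ i ∈ RingHom.ker (π : B →+* A), ∀ j ∈ RingHom.ker (π : B →+* A), i * j = 0) ∧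
    (∀ x y, π x = π y → m x y = x + y - algebraMap A B (π x)) :=
  ⟨fun _ hi _ hj => mul_eq_zero_of_unit_laws π hmul hunit₁ hunit₂ hi hj,
    fun _ _ hxy => eq_sub_of_add_eq (apply_add_algebraMap_of_unit_laws π hadd hunit₁ hunit₂ hxy)⟩

/-- Let `B` be an augmented commutative `A`-algebra, with augmentation
`π : B →ₐ[A] A` (so `B ≅ A ⊕ I` with `I = ker π`, and the unit section is
`σ = algebraMap A B`).  Suppose `m` is a multiplication on `B` in the category of augmented
`A`-algebras, i.e. an `A`-algebra homomorphism on the fiber product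
`B ×_A B = {(x, y) | π x = π y}` compatible with the augmentations, which admits
`σ ∘ π` as a two-sided unit (so that `(B, m)` is an abelian group object).  Then `I² = 0`
and `m` is given on `A ⊕ I ⊕ I` by `(a, b, c) ↦ (a, b + c)`, i.e.
`m x y = x + y - σ (π x)`. -/
theorem augmented_group_object_square_zero {A B : Type*} [CommRing A] [CommRing B]
    [Algebra A B] (π : B →ₐ[A] A) (m : B → B → B)
    -- `m` respects the augmentation
    (haug : ∀ x y, π x = π y → π (m x y) = π x)
    -- `m` is additive on the fiber product `B ×_A B`
    (hadd : ∀ x y x' y', π x = π y → π x' = π y' →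
      m (x + x') (y + y') = m x y + m x' y')
    -- `m` is multiplicative on the fiber product `B ×_A B`
    (hmul : ∀ x y x' y', π x = π y → π x' = π y' →
      m (x * x') (y * y') = m x y * m x' y')
    -- `m` is `A`-linear/unital: it sends the diagonal image of `A` to itself
    (halg : ∀ a : A, m (algebraMap A B a) (algebraMap A B a) = algebraMap A B a)
    -- the unit laws: `σ ∘ π` is a two-sided unit for `m`
    (hunit₁ : ∀ x, m x (algebraMap A B (π x)) = x)
    (hunit₂ : ∀ x, m (algebraMap A B (π x)) x = x) :
    (∀ i ∈ RingHom.ker (π : B →+* A), ∀ j ∈ RingHom.ker (π : B →+* A), i * j = 0) ∧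
    (∀ x y, π x = π y → m x y = x + y - algebraMap A B (π x)) :=
  augmented_group_object_square_zero_general π m hadd hmul hunit₁ hunit₂
end

section
/- Let R be a commutative ring and I ⊆ R a pure ideal (i.e., R/I is flat as an R-module). Then the closed subset V(I) ⊆ Spec R is stable under generalization: if 𝔭 ∈ V(I) and 𝔮 ⊆ 𝔭 is a prime, then 𝔮 ∈ V(I). -/
open PrimeSpectrum

lemma Ideal.stableUnderGeneralization_zeroLocus_of_pure {R : Type*} [CommRing R] (I : Ideal R)
    [I.Pure] : StableUnderGeneralization (zeroLocus (I : Set R)) := by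
  intro p q hqp hp x hx
  obtain ⟨y, hy, hxy⟩ := I.exists_eq_mul_of_pure hx
  have hqp : q.asIdeal ≤ p.asIdeal := (le_iff_specializes q p).mpr hqp
  have hy_notMem : 1 - y ∉ q.asIdeal := fun h ↦
    p.isPrime.one_notMem (by simpa using p.asIdeal.add_mem (hqp h) (hp hy))
  have hzero : x * (1 - y) ∈ q.asIdeal := by
    rw [mul_sub, mul_one, ← hxy, sub_self]
    exact q.asIdeal.zero_mem
  exact (q.isPrime.mem_or_mem hzero).resolve_right hy_notMem

/-- If `I` is a pure ideal of a commutative ring `R` (i.e. `R/I` is flat as an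
`R`-module), then the closed subset `V(I) ⊆ Spec R` is stable under generalization: if a
prime `𝔭` contains `I` and `𝔮 ⊆ 𝔭` is a prime, then `𝔮` contains `I`. -/
theorem pure_ideal_zeroLocus_stableUnderGeneralization (R : Type*) [CommRing R]
    (I : Ideal R) (hI : Module.Flat R (R ⧸ I)) :
    ∀ p ∈ PrimeSpectrum.zeroLocus (I : Set R), ∀ q : PrimeSpectrum R,
      q.asIdeal ≤ p.asIdeal → q ∈ PrimeSpectrum.zeroLocus (I : Set R) := by
  have : I.Pure := hI
  exact fun p hp q hqp ↦
    I.stableUnderGeneralization_zeroLocus_of_pure ((le_iff_specializes q p).mp hqp) hp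
end

section
/- Let X be a topological space that is nonempty, connected, and in which the collection of locally closed subsets containing a fixed point x is linearly ordered by inclusion. Then every point of X specializes to x, or every point of X generalizes to x (i.e., for all y ∈ X, x ∈ closure({y}); or for all y ∈ X, y ∈ closure({x})). -/
/-!
Only open sets and closed sets containing `x` need to be compared. If `a` does not specialize
to `x`, comparing the open set `(closure {a})ᶜ` with the closed set `closure {a} ∪ closure {x}`
forces `closure {a} ∪ closure {x} = univ`. Applied to a point `z ∈ closure {x}` this gives
`closure {x} = univ` at once; if instead every point of `closure {x}` specializes to `x`, then
`closure {x} = (closure {a})ᶜ` is clopen, hence everything.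
-/

open Set

section OpenClosedChain

variable {X : Type*} [TopologicalSpace X] {x a : X}
  (hx : ∀ U C : Set X, IsOpen U → IsClosed C → x ∈ U → x ∈ C → U ⊆ C ∨ C ⊆ U)
include hx

theorem closure_singleton_union_eq_univ_of_not_specializes (ha : ¬a ⤳ x) :
    closure {a} ∪ closure {x} = univ := by
  have hxU : x ∈ (closure {a})ᶜ := fun hxa => ha (specializes_iff_mem_closure.mpr hxa)
  have haC : a ∈ closure {a} ∪ closure {x} := Or.inl (subset_closure rfl)
  rcases hx _ (closure {a} ∪ closure {x}) isClosed_closure.isOpen_compl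
      (isClosed_closure.union isClosed_closure) hxU (Or.inr (subset_closure rfl)) with hUC | hCU
  · rw [← union_self (closure {a}), union_assoc]
    exact compl_subset_iff_union.mp hUC
  · exact (hCU haC (subset_closure rfl)).elim

theorem closure_singleton_eq_univ_of_not_specializes [ConnectedSpace X] (ha : ¬a ⤳ x) :
    closure {x} = univ := by
  by_cases hK : ∃ z ∈ closure {x}, ¬z ⤳ x
  · obtain ⟨z, hzK, hz⟩ := hK
    have hzx : closure {z} ⊆ closure {x} := specializes_iff_closure_subset.mp
      (specializes_iff_mem_closure.mpr hzK)
    rw [← closure_singleton_union_eq_univ_of_not_specializes hx hz, union_eq_right.mpr hzx]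
  · push Not at hK
    have hxU : x ∈ (closure {a})ᶜ := fun hxa => ha (specializes_iff_mem_closure.mpr hxa)
    have hKU : closure {x} = (closure {a})ᶜ := Subset.antisymm
      (fun z hz => (hK z hz).mem_open isClosed_closure.isOpen_compl hxU)
      (compl_subset_iff_union.mpr (closure_singleton_union_eq_univ_of_not_specializes hx ha))
    exact IsClopen.eq_univ ⟨isClosed_closure, hKU ▸ isClosed_closure.isOpen_compl⟩
      ⟨x, subset_closure rfl⟩

end OpenClosedChain

theorem specializes_or_generalizes_of_locallyClosed_chain_general {X : Type*} [TopologicalSpace X]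
    [ConnectedSpace X] (x : X)
    (h : ∀ U V : Set X, IsLocallyClosed U → IsLocallyClosed V → x ∈ U → x ∈ V →
      U ⊆ V ∨ V ⊆ U) :
    (∀ y : X, x ∈ closure ({y} : Set X)) ∨ (∀ y : X, y ∈ closure ({x} : Set X)) := by
  have hx : ∀ U C : Set X, IsOpen U → IsClosed C → x ∈ U → x ∈ C → U ⊆ C ∨ C ⊆ U :=
    fun U C hU hC => h U C hU.isLocallyClosed hC.isLocallyClosed
  by_cases hgen : ∀ y : X, y ⤳ x
  · exact Or.inl fun y => specializes_iff_mem_closure.mp (hgen y)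
  · obtain ⟨a, ha⟩ := not_forall.mp hgen
    rw [closure_singleton_eq_univ_of_not_specializes hx ha]
    exact Or.inr fun y => mem_univ y

/-- Let `X` be a nonempty connected topological space in which the locally
closed subsets containing a fixed point `x` are linearly ordered by inclusion.  Then either
every point of `X` specializes to `x`, or every point of `X` generalizes to `x`. -/
theorem specializes_or_generalizes_of_locallyClosed_chain {X : Type*} [TopologicalSpace X]
    [Nonempty X] [ConnectedSpace X] (x : X)
    (h : ∀ U V : Set X, IsLocallyClosed U → IsLocallyClosed V → x ∈ U → x ∈ V →
      U ⊆ V ∨ V ⊆ U) :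
    (∀ y : X, x ∈ closure ({y} : Set X)) ∨ (∀ y : X, y ∈ closure ({x} : Set X)) :=
  specializes_or_generalizes_of_locallyClosed_chain_general x h
end

section
/- Let X be a topological space in which the collection of locally closed subsets containing a fixed point x is linearly ordered by inclusion, and suppose every point of X specializes to x. Then the closures V(y) = closure({y}) for y ∈ X are linearly ordered: for all y, z ∈ X, either closure({y}) ⊆ closure({z}) or closure({z}) ⊆ closure({y}). In particular, X is irreducible. -/
/-!
Closures of points are closed, hence locally closed, and all contain `x`; so they form a chain.
A chain of point closures makes the specialization preorder total, and a set on which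
specialization is total is preirreducible: of two points, the more general one lies in every open
set containing the other.
-/

theorem isPreirreducible_of_specializes_total {X : Type*} [TopologicalSpace X] {s : Set X}
    (hs : ∀ y ∈ s, ∀ z ∈ s, y ⤳ z ∨ z ⤳ y) : IsPreirreducible s := by
  rintro U V hU hV ⟨y, hys, hyU⟩ ⟨z, hzs, hzV⟩
  rcases hs y hys z hzs with hyz | hzy
  · exact ⟨y, hys, hyU, hyz.mem_open hV hzV⟩
  · exact ⟨z, hzs, hzy.mem_open hU hyU, hzV⟩

theorem irreducibleSpace_of_specializes_total {X : Type*} [TopologicalSpace X] [Nonempty X]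
    (h : ∀ y z : X, y ⤳ z ∨ z ⤳ y) : IrreducibleSpace X where
  isPreirreducible_univ := isPreirreducible_of_specializes_total fun y _ z _ => h y z
  toNonempty := ‹_›

/-- Let `X` be a topological space in which the locally closed subsets
containing a fixed point `x` are linearly ordered by inclusion, and suppose every point of
`X` specializes to `x`.  Then the closures of points are linearly ordered by inclusion, and
in particular `X` is irreducible. -/
theorem closures_linearly_ordered_of_locallyClosed_chain {X : Type*} [TopologicalSpace X]
    (x : X)
    (h : ∀ U V : Set X, IsLocallyClosed U → IsLocallyClosed V → x ∈ U → x ∈ V →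
      U ⊆ V ∨ V ⊆ U)
    (hs : ∀ y : X, x ∈ closure ({y} : Set X)) :
    (∀ y z : X, closure ({y} : Set X) ⊆ closure ({z} : Set X) ∨
      closure ({z} : Set X) ⊆ closure ({y} : Set X)) ∧ IrreducibleSpace X := by
  have closures_chain : ∀ y z : X, closure ({y} : Set X) ⊆ closure ({z} : Set X) ∨
      closure ({z} : Set X) ⊆ closure ({y} : Set X) := fun y z =>
    h _ _ isClosed_closure.isLocallyClosed isClosed_closure.isLocallyClosed (hs y) (hs z)
  have : Nonempty X := ⟨x⟩
  refine ⟨closures_chain, irreducibleSpace_of_specializes_total fun y z => ?_⟩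
  simpa only [specializes_iff_closure_subset, or_comm] using closures_chain y z
end

section
/- Let X be a scheme and suppose Spec k → X is a monomorphism of schemes from the spectrum of a field k. Then there exists a unique point x ∈ X and a unique isomorphism Spec k ≅ Spec κ(x) over X, where κ(x) is the residue field of x. -/
/-!
A monomorphism `f : Spec k ⟶ X` lies over the point `x` it hits and factors as
`Spec k ⟶ Spec κ(x) ⟶ X` through a field map `κ(x) ⟶ k`. The first factor is again a
monomorphism, so `κ(x) ⟶ k` is an epimorphism of rings, i.e. `a ⊗ 1 = 1 ⊗ a` in `k ⊗_{κ(x)} k`.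
Since `k` is faithfully flat over the field `κ(x)`, this forces `k = κ(x)`. Uniqueness holds
because `Spec κ(x) ⟶ X` is a monomorphism with image `{x}`.
-/

open CategoryTheory AlgebraicGeometry

theorem Algebra.IsEpi.surjective_algebraMap_of_faithfullyFlat (R A : Type*) [CommRing R]
    [CommRing A] [Algebra R A] [Algebra.IsEpi R A] [Module.FaithfullyFlat R A] :
    Function.Surjective (algebraMap R A) := by
  let π := (LinearMap.range (Algebra.linearMap R A)).mkQ
  have hπ1 : π 1 = 0 := (Submodule.Quotient.mk_eq_zero _).mpr ⟨1, map_one (algebraMap R A)⟩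
  intro a
  -- push `1 ⊗ a = a ⊗ 1` into `A ⊗[R] (A ⧸ R)`, where the right-hand side dies
  have h : (1 : A) ⊗ₜ[R] π a = a ⊗ₜ[R] π 1 :=
    congrArg (π.lTensor A) ((Algebra.isEpi_iff_forall_one_tmul_eq R A).mp ‹_› a)
  rw [hπ1, TensorProduct.tmul_zero, Module.FaithfullyFlat.one_tmul_eq_zero_iff] at h
  exact (Submodule.Quotient.mk_eq_zero _).mp h

theorem CommRingCat.isIso_of_epi_of_field {K : Type u} [Field K] {A : CommRingCat.{u}}
    [Nontrivial A] (φ : CommRingCat.of K ⟶ A) [Epi φ] : IsIso φ := by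
  algebraize [φ.hom]
  have : Algebra.IsEpi K A := CommRingCat.epi_iff_epi.mp ‹Epi φ›
  exact (ConcreteCategory.isIso_iff_bijective φ).mpr
    ⟨φ.hom.injective, Algebra.IsEpi.surjective_algebraMap_of_faithfullyFlat K A⟩

theorem AlgebraicGeometry.Spec.epi_of_mono_map {R S : CommRingCat} (φ : R ⟶ S)
    [Mono (Spec.map φ)] : Epi φ :=
  have : Mono φ.op := Scheme.Spec.mono_of_mono_map ‹Mono (Spec.map φ)›
  unop_epi_of_mono φ.op

theorem AlgebraicGeometry.Scheme.isIso_descResidueField_stalkClosedPointTo_of_mono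
    {X : Scheme.{u}} {k : Type u} [Field k] (f : Spec (.of k) ⟶ X) [Mono f] :
    IsIso (X.descResidueField (Scheme.stalkClosedPointTo f)) := by
  set φ := X.descResidueField (stalkClosedPointTo f)
  have : Mono (Spec.map φ) := by
    have : Mono (Spec.map φ ≫ X.fromSpecResidueField _) := by
      rwa [descResidueField_stalkClosedPointTo_fromSpecResidueField]
    exact mono_of_mono _ (X.fromSpecResidueField _)
  have : Epi φ := Spec.epi_of_mono_map φ
  exact CommRingCat.isIso_of_epi_of_field (K := X.residueField _) φ

/-- If `Spec k ⟶ X` is a monomorphism of schemes from the spectrum of a field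
`k`, then there is a unique point `x ∈ X` and a unique isomorphism
`Spec k ≅ Spec κ(x)` over `X` (where `Spec κ(x) ⟶ X` is the canonical residue field
morphism). -/
theorem mono_from_spec_field {X : Scheme.{u}} (k : Type u) [Field k]
    (f : Spec (CommRingCat.of k) ⟶ X) [Mono f] :
    ∃! x : X, ∃! e : Spec (CommRingCat.of k) ≅ Spec (X.residueField x),
      e.hom ≫ X.fromSpecResidueField x = f := by
  let φ := X.descResidueField (Scheme.stalkClosedPointTo f)
  have hfactor : Spec.map φ ≫ X.fromSpecResidueField _ = f :=
    Scheme.descResidueField_stalkClosedPointTo_fromSpecResidueField k X f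
  have := Scheme.isIso_descResidueField_stalkClosedPointTo_of_mono f
  refine ⟨_, ⟨asIso (Spec.map φ), hfactor, fun e he ↦ Iso.ext ?_⟩, ?_⟩
  · rw [← cancel_mono (X.fromSpecResidueField _), he, asIso_hom, hfactor]
  · rintro y ⟨e, he, -⟩
    rw [← he]
    exact (Scheme.fromSpecResidueField_apply y _).symm
end
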